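/- arXiv:1301.5585 — 3 statements merged into one kernel-verified Lean document; each statement's English description precedes it below -/
import Mathlib

section
/- For every atom A of a regular language L and every word w ∈ Σ*, the left quotient w⁻¹A is a (possibly empty) union of atoms of L. -/
/-! Basic definitions: left quotients, atoms, and operations on finite automata. -/

/-- The left quotient of a language `L` by a word `w`: `w⁻¹L = {x | w ++ x ∈ L}`. -/
def leftQuot {α : Type} (L : Language α) (w : List α) : Language α := {x | w ++ x ∈ L}

/-- The set of all left quotients of `L`. -/
def quots {α : Type} (L : Language α) : Set (Language α) := {K | ∃ w : List α, K = leftQuot L w}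

/-- `A` is an atom of `L`: a non-empty intersection `K̃_0 ∩ ⋯ ∩ K̃_{n−1}` where each `K̃_i` is a
quotient `K_i` of `L` or its complement (`S` is the set of uncomplemented quotients, so a word is
in the intersection iff it belongs exactly to the quotients in `S`). -/
def IsAtomOf {α : Type} (L A : Language α) : Prop :=
  (∃ x, x ∈ A) ∧ ∃ S : Set (Language α), S ⊆ quots L ∧
    A = {x | ∀ K ∈ quots L, (x ∈ K ↔ K ∈ S)}

/-- A positive atom: at least one term of its defining intersection is uncomplemented,
equivalently the atom is contained in some quotient of `L`. -/
def IsPositiveAtomOf {α : Type} (L A : Language α) : Prop :=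
  IsAtomOf L A ∧ ∃ K ∈ quots L, ∀ x ∈ A, x ∈ K

namespace NFA

/-- The right language of a state `q`: words accepted starting from `q`. -/
def rightLang {α σ : Type} (M : NFA α σ) (q : σ) : Language α :=
  {w | ∃ p ∈ M.accept, p ∈ M.evalFrom {q} w}

/-- The left language of a state `q`: words leading from the initial states to `q`. -/
def leftLang {α σ : Type} (M : NFA α σ) (q : σ) : Language α :=
  {w | q ∈ M.eval w}

/-- An NFA is trim if every state has a non-empty left language and right language. -/
def IsTrim {α σ : Type} (M : NFA α σ) : Prop :=
  ∀ q, (∃ w, w ∈ M.leftLang q) ∧ (∃ w, w ∈ M.rightLang q)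

/-- An NFA is reduced if distinct states have distinct right languages. -/
def IsReduced {α σ : Type} (M : NFA α σ) : Prop :=
  ∀ q p, M.rightLang q = M.rightLang p → q = p

/-- An NFA is atomic if the right language of every state is a union of positive atoms of the
accepted language. -/
def IsAtomic {α σ : Type} (M : NFA α σ) : Prop :=
  ∀ q, ∃ 𝒜 : Set (Language α), (∀ A ∈ 𝒜, IsPositiveAtomOf M.accepts A) ∧
    M.rightLang q = {w | ∃ A ∈ 𝒜, w ∈ A}

/-- Reversal of an NFA: interchange initial and final states and reverse all transitions. -/
def rev {α σ : Type} (M : NFA α σ) : NFA α σ :=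
  ⟨fun q a => {p | q ∈ M.step p a}, M.accept, M.start⟩

/-- States of the determinization of an NFA: the subsets of states reachable from the initial
subset. -/
def detStates {α σ : Type} (M : NFA α σ) : Type := {S : Set σ // ∃ w, M.eval w = S}

instance {α σ : Type} [Finite σ] (M : NFA α σ) : Finite M.detStates :=
  Subtype.finite

/-- Determinization of an NFA by the subset construction, keeping only the subsets reachable
from the initial subset. -/
def det {α σ : Type} (M : NFA α σ) : DFA α M.detStates where
  step S a := ⟨M.stepSet S.1 a, by
    obtain ⟨w, hw⟩ := S.2
    exact ⟨w ++ [a], by rw [NFA.eval_append_singleton, hw]⟩⟩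
  start := ⟨M.start, [], rfl⟩
  accept := {S | ∃ p ∈ M.accept, p ∈ S.1}

end NFA

/-- Reversal of a DFA, yielding an NFA. -/
def DFA.rev {α σ : Type} (M : DFA α σ) : NFA α σ :=
  ⟨fun q a => {p | M.step p a = q}, M.accept, {M.start}⟩

/-- A DFA is minimal if no DFA accepting the same language has fewer states. -/
def DFA.IsMinimal {α σ : Type} (M : DFA α σ) : Prop :=
  ∀ (σ' : Type) (_ : Finite σ') (M' : DFA α σ'), M'.accepts = M.accepts →
    Nat.card σ ≤ Nat.card σ'

/-! Words lying in the same quotients of `L` lie in the same atom, and this relation is a congruence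
for prepending a word `w`, because `u⁻¹L` contains `w y` iff `(u w)⁻¹L` contains `y`. So if
`w x` lies in the atom `A`, then so does `w y` for every `y` in the atom of `x`, and `w⁻¹A` is the
union of the atoms of its words. -/

def atomOf {α : Type} (L : Language α) (x : List α) : Language α :=
  {y | ∀ K ∈ quots L, (y ∈ K ↔ x ∈ K)}

section

variable {α : Type} {L : Language α}

theorem leftQuot_leftQuot (L : Language α) (u w : List α) :
    leftQuot (leftQuot L u) w = leftQuot L (u ++ w) := by
  ext x
  show u ++ (w ++ x) ∈ L ↔ u ++ w ++ x ∈ L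
  rw [List.append_assoc]

theorem mem_atomOf_self (L : Language α) (x : List α) : x ∈ atomOf L x :=
  fun _ _ => Iff.rfl

theorem isAtomOf_atomOf (L : Language α) (x : List α) : IsAtomOf L (atomOf L x) := by
  refine ⟨⟨x, mem_atomOf_self L x⟩, {K | K ∈ quots L ∧ x ∈ K}, fun _ hK => hK.1, ?_⟩
  ext y
  exact forall₂_congr fun K hK => by simp [hK]

theorem IsAtomOf.eq_atomOf {A : Language α} (hA : IsAtomOf L A) {x : List α} (hx : x ∈ A) :
    A = atomOf L x := by
  obtain ⟨-, S, -, rfl⟩ := hA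
  ext y
  exact forall₂_congr fun K hK => by rw [hx K hK]

theorem append_mem_atomOf {x y : List α} (w : List α) (h : y ∈ atomOf L x) :
    w ++ y ∈ atomOf L (w ++ x) := by
  rintro _ ⟨u, rfl⟩
  have := h _ ⟨u ++ w, rfl⟩
  rwa [← leftQuot_leftQuot] at this

theorem eq_setOf_exists_atomOf_of_saturated {X : Language α}
    (hX : ∀ x ∈ X, atomOf L x ≤ X) : X = {y | ∃ B ∈ atomOf L '' X, y ∈ B} := by
  ext y
  constructor
  · exact fun hy => ⟨_, ⟨y, hy, rfl⟩, mem_atomOf_self L y⟩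
  · rintro ⟨_, ⟨x, hx, rfl⟩, hy⟩
    exact hX x hx hy

end

theorem leftQuot_atom_union_atoms_general {α : Type} {L : Language α}
    {A : Language α} (hA : IsAtomOf L A) (w : List α) :
    ∃ 𝒜 : Set (Language α), (∀ B ∈ 𝒜, IsAtomOf L B) ∧
      leftQuot A w = {x | ∃ B ∈ 𝒜, x ∈ B} := by
  refine ⟨atomOf L '' leftQuot A w, ?_, eq_setOf_exists_atomOf_of_saturated ?_⟩
  · rintro _ ⟨x, -, rfl⟩
    exact isAtomOf_atomOf L x
  · intro x hx y hy
    change w ++ y ∈ A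
    rw [hA.eq_atomOf hx]
    exact append_mem_atomOf w hy

/-- For every atom `A` of a regular language `L` and every word `w`, the left
quotient `w⁻¹A` is a (possibly empty) union of atoms of `L`. -/
theorem leftQuot_atom_union_atoms {α : Type} [Finite α] {L : Language α} (hL : L.IsRegular)
    {A : Language α} (hA : IsAtomOf L A) (w : List α) :
    ∃ 𝒜 : Set (Language α), (∀ B ∈ 𝒜, IsAtomOf L B) ∧
      leftQuot A w = {x | ∃ B ∈ 𝒜, x ∈ B} :=
  leftQuot_atom_union_atoms_general hA w
end

section
/- If D is a DFA accepting a language L in which every state is reachable from the initial state, then D^{R D}, the automaton obtained from D by reversal followed by determinization viaapply the subset construction (keeping only subsets reachable from the initial subset), is a minimal DFA accepting the reversal language L^R. -/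
/-!
A reachable subset `S` of `D^R` is the set of states from which the reversal of the input leads
into `F`, so the language accepted from `S` in `D^{RD}` is `{x | D.eval x.reverse ∈ S}`. Since
every state of `D` is `D.eval u` for some `u`, this language determines `S`: the determinized
automaton is reduced. It is also reachable by construction, and a reachable reduced DFA is minimal,
because mapping each state `M.eval u` to `M'.eval u` is well defined and injective for any `M'`
accepting the same language (both are governed by the left quotient of the language by `u`).
-/

namespace NFA

variable {α σ : Type}

theorem det_evalFrom (M : NFA α σ) (S : M.detStates) (w : List α) :
    (M.det.evalFrom S w).1 = M.evalFrom S.1 w := by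
  induction w generalizing S with
  | nil => rfl
  | cons a w ih => exact ih (M.det.step S a)

theorem det_eval_surjective (M : NFA α σ) (S : M.detStates) : ∃ w, M.det.eval w = S := by
  obtain ⟨w, hw⟩ := S.2
  exact ⟨w, Subtype.ext ((M.det_evalFrom M.det.start w).trans hw)⟩

end NFA

namespace DFA

variable {α σ : Type}

theorem isMinimal_of_reachable_of_injective_acceptsFrom (M : DFA α σ)
    (hreach : ∀ s, ∃ w, M.eval w = s) (hred : Function.Injective M.acceptsFrom) :
    M.IsMinimal := by
  intro σ' _ M' hM'
  choose u hu using hreach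
  refine Nat.card_le_card_of_injective (fun s => M'.eval (u s)) fun s t hst => hred ?_
  have hquot : M.accepts.leftQuotient (u s) = M.accepts.leftQuotient (u t) := by
    rw [← hM', Language.leftQuotient_accepts_apply, Language.leftQuotient_accepts_apply]
    exact congrArg M'.acceptsFrom hst
  rwa [Language.leftQuotient_accepts_apply, Language.leftQuotient_accepts_apply, hu, hu] at hquot

theorem rev_evalFrom (D : DFA α σ) (S : Set σ) (w : List α) :
    D.rev.evalFrom S w = {p | D.evalFrom p w.reverse ∈ S} := by
  induction w generalizing S with
  | nil => rfl
  | cons a w ih =>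
    rw [NFA.evalFrom_cons, ih]
    ext p
    simp [NFA.mem_stepSet, DFA.rev, DFA.evalFrom_append_singleton]

theorem rev_det_acceptsFrom (D : DFA α σ) (S : D.rev.detStates) :
    D.rev.det.acceptsFrom S = {x | D.eval x.reverse ∈ S.1} := by
  ext x
  change (∃ p ∈ ({D.start} : Set σ), p ∈ (D.rev.det.evalFrom S x).1) ↔ _
  simp only [NFA.det_evalFrom, rev_evalFrom, Set.mem_singleton_iff, exists_eq_left]
  rfl

theorem rev_det_accepts (D : DFA α σ) : D.rev.det.accepts = D.accepts.reverse :=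
  D.rev_det_acceptsFrom D.rev.det.start

theorem rev_det_injective_acceptsFrom (D : DFA α σ) (hreach : ∀ q, ∃ w, D.eval w = q) :
    Function.Injective D.rev.det.acceptsFrom := by
  intro S T hST
  refine Subtype.ext (Set.ext fun q => ?_)
  obtain ⟨u, rfl⟩ := hreach q
  have hu := Set.ext_iff.mp hST u.reverse
  simpa only [rev_det_acceptsFrom, Set.mem_ofPred_eq, List.reverse_reverse] using hu

end DFA

theorem brzozowski_minimal_general {α σ : Type} (D : DFA α σ) (L : Language α)
    (hacc : D.accepts = L) (hreach : ∀ q : σ, ∃ w : List α, D.eval w = q) :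
    D.rev.det.accepts = L.reverse ∧ D.rev.det.IsMinimal :=
  ⟨hacc ▸ D.rev_det_accepts,
    D.rev.det.isMinimal_of_reachable_of_injective_acceptsFrom D.rev.det_eval_surjective
      (D.rev_det_injective_acceptsFrom hreach)⟩

/-- If `D` is a DFA accepting `L` in which every state is reachable from the
initial state, then `D^{R D}` (reversal followed by determinization keeping only reachable
subsets) is a minimal DFA accepting the reversal language `L^R`. -/
theorem brzozowski_minimal {α σ : Type} [Finite σ] (D : DFA α σ) (L : Language α)
    (hacc : D.accepts = L) (hreach : ∀ q : σ, ∃ w : List α, D.eval w = q) :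
    D.rev.det.accepts = L.reverse ∧ D.rev.det.IsMinimal :=
  brzozowski_minimal_general D L hacc hreach
end

section
/- Let L be a non-empty regular language with átomaton A = (𝒜, Σ, α, I_A, {A_f}), and let B = (𝒞, Σ, β, 𝒞_I, 𝒞_F) be a trim NFA whose states B_1,…,B_r are distinct non-empty sets of positive atoms of L, with 𝒞_I, 𝒞_F ⊆ 𝒞; for 𝒞_i ⊆ 𝒞 let S(𝒞_i) = ⋃_{B_i ∈ 𝒞_i} B_i. Then B is a reduced atomic NFA accepting L, in which the right language of each state B_i equals the union of the atoms in B_i, if and only if the following three conditions hold: (1) S(𝒞_I) equals the set of initial atoms I_A; (2) S(β(B_i, a)) = α(B_i, a) for every state B_i and letter a; (3) B_i ∈ 𝒞_F if and only if the final atom A_f belongs to B_i. -/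
/-- The atom of `L` containing the word `w`: the intersection `K̃_0 ∩ ⋯ ∩ K̃_{n−1}` in which
`K̃_i = K_i` if `w ∈ K_i` and `K̃_i = K̄_i` otherwise. -/
def atomIn {α : Type} (L : Language α) (w : List α) : Language α :=
  {x | ∀ K ∈ quots L, (x ∈ K ↔ w ∈ K)}

/-- The transition relation `α` of the átomaton, on atoms as languages: `B ∈ atomStep L A a`
iff `B` is an atom of `L` with `a·B ⊆ A`. -/
def atomStep {α : Type} (L : Language α) (A : Language α) (a : α) : Set (Language α) :=
  {B | IsAtomOf L B ∧ ∀ x ∈ B, a :: x ∈ A}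

/-- `atomStep` extended to a set of atoms. -/
def atomStepSet {α : Type} (L : Language α) (S : Set (Language α)) (a : α) :
    Set (Language α) :=
  ⋃ A ∈ S, atomStep L A a

/-- `atomStepSet` extended to words. -/
def atomEval {α : Type} (L : Language α) (S : Set (Language α)) : List α → Set (Language α) :=
  List.foldl (atomStepSet L) S

/-!
Every word `w` lies in exactly one atom, `atomIn L w`, so a set of atoms is determined by which
of the atoms `atomIn L w` it contains, and `w` lies in the union `S(B_q)` iff
`atomIn L w ∈ st q`. Conditions (2) and (3) then become exactly the equations
`ε ∈ R_q ↔ q ∈ F` and `a w ∈ R_q ↔ ∃ p ∈ β(q, a), w ∈ R_p`, which determine the right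
languages `R_q` of `B` by induction on words; so (2) ∧ (3) holds iff `R_q = S(B_q)` for all `q`.
Given this, (1) says precisely that `B` accepts `L`, and `B` is reduced and atomic because its
states are distinct sets of positive atoms.
-/

namespace NFA

variable {α σ : Type} (M : NFA α σ)

theorem rightLang_eq_acceptsFrom (q : σ) : M.rightLang q = M.acceptsFrom {q} := rfl

theorem mem_acceptsFrom_iff_exists_rightLang {S : Set σ} {w : List α} :
    w ∈ M.acceptsFrom S ↔ ∃ q ∈ S, w ∈ M.rightLang q := by
  simp only [mem_acceptsFrom, mem_evalFrom_iff_exists (S := S), rightLang]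
  exact ⟨fun ⟨p, hp, q, hq, h⟩ => ⟨q, hq, p, hp, h⟩, fun ⟨q, hq, p, hp, h⟩ => ⟨p, hp, q, hq, h⟩⟩

theorem nil_mem_rightLang {q : σ} : [] ∈ M.rightLang q ↔ q ∈ M.accept := by
  simp [rightLang_eq_acceptsFrom]

theorem cons_mem_rightLang {q : σ} {a : α} {w : List α} :
    a :: w ∈ M.rightLang q ↔ ∃ p ∈ M.step q a, w ∈ M.rightLang p := by
  rw [rightLang_eq_acceptsFrom, cons_mem_acceptsFrom, stepSet_singleton,
    mem_acceptsFrom_iff_exists_rightLang]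

theorem mem_accepts_iff_exists_rightLang {w : List α} :
    w ∈ M.accepts ↔ ∃ q ∈ M.start, w ∈ M.rightLang q :=
  M.mem_acceptsFrom_iff_exists_rightLang

theorem forall_mem_rightLang_iff (P : σ → List α → Prop) :
    (∀ q w, w ∈ M.rightLang q ↔ P q w) ↔
      (∀ q, q ∈ M.accept ↔ P q []) ∧
        ∀ q a w, (∃ p ∈ M.step q a, P p w) ↔ P q (a :: w) := by
  constructor
  · intro h
    refine ⟨fun q => by rw [← h, nil_mem_rightLang], fun q a w => ?_⟩
    simp only [← h, cons_mem_rightLang]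
  · rintro ⟨hnil, hcons⟩ q w
    induction w generalizing q with
    | nil => rw [nil_mem_rightLang, hnil]
    | cons a w ih => simp only [cons_mem_rightLang, ih, hcons]

end NFA

section Atoms

variable {α : Type} {L : Language α}

theorem mem_atomIn_self (w : List α) : w ∈ atomIn L w := fun _ _ => Iff.rfl

theorem cons_mem_atomIn_cons (a : α) {x w : List α} (h : x ∈ atomIn L w) :
    a :: x ∈ atomIn L (a :: w) := by
  rintro K ⟨u, rfl⟩
  have h' := h (leftQuot L (u ++ [a])) ⟨u ++ [a], rfl⟩
  change (u ++ [a]) ++ x ∈ L ↔ (u ++ [a]) ++ w ∈ L at h'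
  change u ++ a :: x ∈ L ↔ u ++ a :: w ∈ L
  simpa using h'

theorem forall_mem_atomIn_mem_iff {w : List α} : (∀ x ∈ atomIn L w, x ∈ L) ↔ w ∈ L :=
  ⟨fun h => h w (mem_atomIn_self w), fun hw _ hx => (hx L ⟨[], rfl⟩).2 hw⟩

theorem isAtomOf_atomIn (w : List α) : IsAtomOf L (atomIn L w) := by
  refine ⟨⟨w, mem_atomIn_self w⟩, {K | K ∈ quots L ∧ w ∈ K}, fun K hK => hK.1, ?_⟩
  ext y
  exact forall₂_congr fun K hK => by simp [hK]

theorem IsAtomOf.eq_atomIn {A : Language α} (hA : IsAtomOf L A) {x : List α} (hx : x ∈ A) :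
    A = atomIn L x := by
  obtain ⟨-, S, -, rfl⟩ := hA
  ext y
  exact forall₂_congr fun K hK => by rw [hx K hK]

theorem isAtomOf_iff_exists_eq_atomIn {A : Language α} : IsAtomOf L A ↔ ∃ w, A = atomIn L w :=
  ⟨fun hA => hA.1.imp fun _ => hA.eq_atomIn, fun ⟨w, hw⟩ => hw ▸ isAtomOf_atomIn w⟩

end Atoms

section AtomSets

variable {α σ : Type} {L : Language α} {S T : Set (Language α)}

theorem exists_mem_atom_iff_atomIn_mem (hS : ∀ A ∈ S, IsAtomOf L A) {w : List α} :
    (∃ A ∈ S, w ∈ A) ↔ atomIn L w ∈ S :=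
  ⟨fun ⟨A, hA, hw⟩ => (hS A hA).eq_atomIn hw ▸ hA, fun h => ⟨_, h, mem_atomIn_self w⟩⟩

theorem atomSet_ext (hS : ∀ A ∈ S, IsAtomOf L A) (hT : ∀ A ∈ T, IsAtomOf L A)
    (h : ∀ w, atomIn L w ∈ S ↔ atomIn L w ∈ T) : S = T := by
  ext A
  constructor
  · intro hA
    obtain ⟨w, rfl⟩ := isAtomOf_iff_exists_eq_atomIn.1 (hS A hA)
    exact (h w).1 hA
  · intro hA
    obtain ⟨w, rfl⟩ := isAtomOf_iff_exists_eq_atomIn.1 (hT A hA)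
    exact (h w).2 hA

theorem biUnion_eq_iff_atomIn_mem {I : Set σ} {st : σ → Set (Language α)}
    (hst : ∀ q, ∀ A ∈ st q, IsAtomOf L A) (hS : ∀ A ∈ S, IsAtomOf L A) :
    (⋃ q ∈ I, st q) = S ↔ ∀ w, (∃ q ∈ I, atomIn L w ∈ st q) ↔ atomIn L w ∈ S := by
  have hmem : ∀ A, A ∈ ⋃ q ∈ I, st q ↔ ∃ q ∈ I, A ∈ st q := by simp
  refine ⟨fun h w => by rw [← hmem, h], fun h => atomSet_ext ?_ hS fun w => by rw [hmem, h]⟩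
  intro A hA
  obtain ⟨q, -, hA⟩ := (hmem A).1 hA
  exact hst q A hA

theorem isAtomOf_of_mem_atomStepSet {a : α} {A : Language α} (h : A ∈ atomStepSet L S a) :
    IsAtomOf L A := by
  simp only [atomStepSet, Set.mem_iUnion] at h
  obtain ⟨_, _, hA⟩ := h
  exact hA.1

theorem atomIn_mem_atomStepSet_iff (hS : ∀ A ∈ S, IsAtomOf L A) {a : α} {w : List α} :
    atomIn L w ∈ atomStepSet L S a ↔ atomIn L (a :: w) ∈ S := by
  simp only [atomStepSet, Set.mem_iUnion, exists_prop]
  constructor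
  · rintro ⟨C, hC, -, hstep⟩
    exact (hS C hC).eq_atomIn (hstep w (mem_atomIn_self w)) ▸ hC
  · intro h
    exact ⟨_, h, isAtomOf_atomIn w, fun x hx => cons_mem_atomIn_cons a hx⟩

end AtomSets

theorem legality_general {α σ : Type} {L : Language α} (B : NFA α σ) (st : σ → Set (Language α))
    (hdist : Function.Injective st)
    (hatoms : ∀ q, (st q).Nonempty ∧ ∀ A ∈ st q, IsPositiveAtomOf L A) :
    (B.accepts = L ∧ B.IsReduced ∧ B.IsAtomic ∧
        ∀ q, B.rightLang q = {w | ∃ A ∈ st q, w ∈ A}) ↔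
      ((⋃ q ∈ B.start, st q) = {A : Language α | IsAtomOf L A ∧ ∀ x ∈ A, x ∈ L} ∧
        (∀ q a, (⋃ p ∈ B.step q a, st p) = atomStepSet L (st q) a) ∧
        (∀ q, q ∈ B.accept ↔ atomIn L [] ∈ st q)) := by
  have hatom : ∀ q, ∀ A ∈ st q, IsAtomOf L A := fun q A hA => ((hatoms q).2 A hA).1
  have hunion : (∀ q, B.rightLang q = {w | ∃ A ∈ st q, w ∈ A}) ↔
      ∀ q w, w ∈ B.rightLang q ↔ atomIn L w ∈ st q := by
    refine forall_congr' fun q => Language.ext_iff.trans (forall_congr' fun w => ?_)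
    exact iff_congr Iff.rfl (exists_mem_atom_iff_atomIn_mem (hatom q))
  have hinit : (⋃ q ∈ B.start, st q) = {A : Language α | IsAtomOf L A ∧ ∀ x ∈ A, x ∈ L} ↔
      ∀ w, (∃ q ∈ B.start, atomIn L w ∈ st q) ↔ w ∈ L := by
    rw [biUnion_eq_iff_atomIn_mem hatom fun A hA => hA.1]
    simp only [Set.mem_ofPred_eq, isAtomOf_atomIn, true_and, forall_mem_atomIn_mem_iff]
  have hstep : (∀ q a, (⋃ p ∈ B.step q a, st p) = atomStepSet L (st q) a) ↔
      ∀ q a w, (∃ p ∈ B.step q a, atomIn L w ∈ st p) ↔ atomIn L (a :: w) ∈ st q := by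
    simp only [biUnion_eq_iff_atomIn_mem hatom fun A => isAtomOf_of_mem_atomStepSet,
      atomIn_mem_atomStepSet_iff (hatom _)]
  have haccepts (hR : ∀ q w, w ∈ B.rightLang q ↔ atomIn L w ∈ st q) :
      B.accepts = L ↔ ∀ w, (∃ q ∈ B.start, atomIn L w ∈ st q) ↔ w ∈ L := by
    simp only [Language.ext_iff, B.mem_accepts_iff_exists_rightLang, hR]
  rw [hinit, hstep, hunion]
  constructor
  · rintro ⟨hBL, -, -, hR⟩
    obtain ⟨hfinal, htrans⟩ := (B.forall_mem_rightLang_iff _).1 hR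
    exact ⟨(haccepts hR).1 hBL, htrans, hfinal⟩
  · rintro ⟨hstart, htrans, hfinal⟩
    have hR := (B.forall_mem_rightLang_iff _).2 ⟨hfinal, htrans⟩
    have hBL := (haccepts hR).2 hstart
    refine ⟨hBL, fun q p hqp => hdist ?_, fun q => ⟨st q, hBL ▸ (hatoms q).2, ?_⟩, hR⟩
    · exact atomSet_ext (hatom q) (hatom p) fun w => by rw [← hR, ← hR, hqp]
    · exact Set.ext fun w => (hR q w).trans (exists_mem_atom_iff_atomIn_mem (hatom q)).symm

/-- **Legality.** Let `B` be a trim NFA whose states are distinct non-empty sets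
of positive atoms of a non-empty regular language `L` (given by the injective map `st`). Then
`B` is a reduced atomic NFA accepting `L` in which the right language of each state equals the
union of its atoms, if and only if: (1) the union of the sets of atoms of the initial states is
the set of initial atoms of `L`; (2) `S(β(q, a)) = α(st q, a)` for every state `q` and letter
`a`; and (3) a state is final iff it contains the final atom `atomIn L []`. -/
theorem legality {α σ : Type} [Finite α] [Finite σ] {L : Language α} (hL : L.IsRegular)
    (hne : ∃ w, w ∈ L) (B : NFA α σ) (st : σ → Set (Language α))
    (hdist : Function.Injective st)
    (hatoms : ∀ q, (st q).Nonempty ∧ ∀ A ∈ st q, IsPositiveAtomOf L A)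
    (htrim : B.IsTrim) :
    (B.accepts = L ∧ B.IsReduced ∧ B.IsAtomic ∧
        ∀ q, B.rightLang q = {w | ∃ A ∈ st q, w ∈ A}) ↔
      ((⋃ q ∈ B.start, st q) = {A : Language α | IsAtomOf L A ∧ ∀ x ∈ A, x ∈ L} ∧
        (∀ q a, (⋃ p ∈ B.step q a, st p) = atomStepSet L (st q) a) ∧
        (∀ q, q ∈ B.accept ↔ atomIn L [] ∈ st q)) :=
  legality_general B st hdist hatoms
end
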